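/- For a real number a > 0 and all z > 0, K_a(z)/K_{a-1}(z) < (a + √(z^2 + a^2))/z, and consequently K_a(z)/K_{a-1}(z) < 2a/z + 1. -/

import Mathlib

/-!
Two properties of `K` drive the bound. Integrating the derivative of `t ↦ e^{-z cosh t} sinh(νt)`
over `(0, ∞)` gives the recurrence `z (K_{ν+1} - K_{ν-1}) = 2ν K_ν`. The identity
`cosh((ν-1)t) cosh((ν+1)t) = cosh²(νt) + sinh²t` together with AM-GM gives
`2 cosh(νt) < r cosh((ν-1)t) + r⁻¹ cosh((ν+1)t)` for every `r > 0` and `t ≠ 0`; integrating and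
taking `r = K_ν / K_{ν-1}` yields the Turán inequality `K_ν² < K_{ν-1} K_{ν+1}`. Eliminating
`K_{ν+1}` leaves `(z K_ν - ν K_{ν-1})² < (z² + ν²) K_{ν-1}²`, which is the first bound; the second
follows from `√(z² + a²) ≤ a + z` for `a ≥ 0`.
-/

open Real Set MeasureTheory

/-- The modified Bessel function of the second kind, via its integral representation. -/
noncomputable def besselK (ν z : ℝ) : ℝ :=
  ∫ t in Ioi (0 : ℝ), Real.exp (-z * Real.cosh t) * Real.cosh (ν * t)

theorem setIntegral_pos_of_forall_pos {X : Type*} [MeasurableSpace X] {μ : Measure X}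
    {s : Set X} {f : X → ℝ} (hs : MeasurableSet s) (hμs : μ s ≠ 0) (hf : IntegrableOn f s μ)
    (hpos : ∀ x ∈ s, 0 < f x) : 0 < ∫ x in s, f x ∂μ := by
  have hnonneg : 0 ≤ᵐ[μ.restrict s] f :=
    (ae_restrict_iff' hs).2 (ae_of_all μ fun x hx => (hpos x hx).le)
  rw [setIntegral_pos_iff_support_of_nonneg_ae hnonneg hf]
  exact (pos_iff_ne_zero.2 hμs).trans_le
    (measure_mono fun x hx => ⟨(hpos x hx).ne', hx⟩)

theorem sq_div_four_le_cosh (t : ℝ) : t ^ 2 / 4 ≤ cosh t := by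
  rw [← cosh_abs, cosh_eq]
  have hpos := quadratic_le_exp_of_nonneg (abs_nonneg t)
  have hneg := add_one_le_exp (-|t|)
  nlinarith [sq_abs t]

theorem cosh_sub_mul_cosh_add (x y : ℝ) :
    cosh (x - y) * cosh (x + y) = cosh x ^ 2 + sinh y ^ 2 := by
  rw [cosh_sub, cosh_add]
  linear_combination sinh y ^ 2 * cosh_sq x + cosh x ^ 2 * cosh_sq y

theorem two_mul_cosh_lt (ν : ℝ) {r : ℝ} (hr : 0 < r) {t : ℝ} (ht : t ≠ 0) :
    2 * cosh (ν * t) < r * cosh ((ν - 1) * t) + r⁻¹ * cosh ((ν + 1) * t) := by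
  have hprod : cosh (ν * t) ^ 2 < cosh ((ν - 1) * t) * cosh ((ν + 1) * t) := by
    rw [sub_one_mul, add_one_mul, cosh_sub_mul_cosh_add]
    exact lt_add_of_pos_right _ (sq_pos_of_ne_zero (sinh_ne_zero.2 ht))
  have hu : 0 < r * cosh ((ν - 1) * t) := by positivity
  have hv : 0 < r⁻¹ * cosh ((ν + 1) * t) := by positivity
  have huv : r * cosh ((ν - 1) * t) * (r⁻¹ * cosh ((ν + 1) * t)) =
      cosh ((ν - 1) * t) * cosh ((ν + 1) * t) := by field_simp
  nlinarith [sq_nonneg (r * cosh ((ν - 1) * t) - r⁻¹ * cosh ((ν + 1) * t)), cosh_pos (ν * t)]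

theorem hasDerivAt_exp_neg_mul_cosh_mul_sinh (z ν t : ℝ) :
    HasDerivAt (fun s => exp (-z * cosh s) * sinh (ν * s))
      (ν * (exp (-z * cosh t) * cosh (ν * t))
        - z / 2 * (exp (-z * cosh t) * cosh ((ν + 1) * t))
        + z / 2 * (exp (-z * cosh t) * cosh ((ν - 1) * t))) t := by
  have hexp := ((hasDerivAt_cosh t).const_mul (-z)).exp
  have hsinh : HasDerivAt (fun s => sinh (ν * s)) (cosh (ν * t) * ν) t := by
    simpa using ((hasDerivAt_id t).const_mul ν).sinh
  refine (hexp.fun_mul hsinh).congr_deriv ?_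
  rw [add_one_mul, sub_one_mul, cosh_add, cosh_sub]
  ring

section

variable {z : ℝ}

theorem neg_mul_cosh_add_mul_le (hz : 0 < z) (c t : ℝ) :
    -z * cosh t + c * t ≤ (c + 1) ^ 2 / z - t := by
  have hsq : z * (t ^ 2 / 4) + (c + 1) ^ 2 / z - (c + 1) * t =
      (z * t - 2 * (c + 1)) ^ 2 / (4 * z) := by
    field_simp
    ring
  have hsq_nonneg : 0 ≤ (z * t - 2 * (c + 1)) ^ 2 / (4 * z) := by positivity
  linarith [mul_le_mul_of_nonneg_left (sq_div_four_le_cosh t) hz.le]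

theorem integrableOn_exp_neg_mul_cosh_mul_exp (hz : 0 < z) (c : ℝ) :
    IntegrableOn (fun t => exp (-z * cosh t) * exp (c * t)) (Ioi 0) := by
  refine ((exp_neg_integrableOn_Ioi 0 one_pos).const_mul (exp ((c + 1) ^ 2 / z))).mono' ?_ ?_
  · exact (by fun_prop : Continuous fun t => exp (-z * cosh t) * exp (c * t)).aestronglyMeasurable
  · refine ae_of_all _ fun t => ?_
    rw [norm_of_nonneg (by positivity), ← exp_add, neg_one_mul, ← exp_add]
    exact exp_le_exp.2 (neg_mul_cosh_add_mul_le hz c t |>.trans_eq (by ring))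

theorem integrableOn_exp_neg_mul_cosh_mul_cosh (hz : 0 < z) (ν : ℝ) :
    IntegrableOn (fun t => exp (-z * cosh t) * cosh (ν * t)) (Ioi 0) := by
  have hexp : (fun t => exp (-z * cosh t) * cosh (ν * t)) = fun t =>
      (exp (-z * cosh t) * exp (ν * t) + exp (-z * cosh t) * exp (-ν * t)) / 2 := by
    ext t
    rw [cosh_eq (ν * t), ← neg_mul]
    ring
  rw [hexp]
  exact ((integrableOn_exp_neg_mul_cosh_mul_exp hz ν).add
    (integrableOn_exp_neg_mul_cosh_mul_exp hz (-ν))).div_const 2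

theorem integrableOn_exp_neg_mul_cosh_mul_sinh (hz : 0 < z) (ν : ℝ) :
    IntegrableOn (fun t => exp (-z * cosh t) * sinh (ν * t)) (Ioi 0) := by
  have hexp : (fun t => exp (-z * cosh t) * sinh (ν * t)) = fun t =>
      (exp (-z * cosh t) * exp (ν * t) - exp (-z * cosh t) * exp (-ν * t)) / 2 := by
    ext t
    rw [sinh_eq, ← neg_mul]
    ring
  rw [hexp]
  exact ((integrableOn_exp_neg_mul_cosh_mul_exp hz ν).sub
    (integrableOn_exp_neg_mul_cosh_mul_exp hz (-ν))).div_const 2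

theorem besselK_pos (hz : 0 < z) (ν : ℝ) : 0 < besselK ν z :=
  setIntegral_pos_of_forall_pos measurableSet_Ioi (by simp)
    (integrableOn_exp_neg_mul_cosh_mul_cosh hz ν) fun _ _ => by positivity

theorem besselK_recurrence (hz : 0 < z) (ν : ℝ) :
    z * (besselK (ν + 1) z - besselK (ν - 1) z) = 2 * ν * besselK ν z := by
  have hK := integrableOn_exp_neg_mul_cosh_mul_cosh hz
  have hderiv_int := (((hK ν).const_mul ν).sub ((hK (ν + 1)).const_mul (z / 2))).add
    ((hK (ν - 1)).const_mul (z / 2))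
  have hlim := tendsto_zero_of_hasDerivAt_of_integrableOn_Ioi
    (fun t _ => hasDerivAt_exp_neg_mul_cosh_mul_sinh z ν t) hderiv_int
    (integrableOn_exp_neg_mul_cosh_mul_sinh hz ν)
  have hFTC := integral_Ioi_of_hasDerivAt_of_tendsto'
    (fun t _ => hasDerivAt_exp_neg_mul_cosh_mul_sinh z ν t) hderiv_int hlim
  rw [integral_add ?_ ((hK (ν - 1)).const_mul (z / 2)), integral_sub ((hK ν).const_mul ν)
    ((hK (ν + 1)).const_mul (z / 2)), integral_const_mul, integral_const_mul,
    integral_const_mul] at hFTC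
  · simp only [mul_zero, sinh_zero, sub_zero] at hFTC
    unfold besselK
    linear_combination -2 * hFTC
  · exact ((hK ν).const_mul ν).sub ((hK (ν + 1)).const_mul (z / 2))

theorem two_mul_besselK_lt (hz : 0 < z) (ν : ℝ) {r : ℝ} (hr : 0 < r) :
    2 * besselK ν z < r * besselK (ν - 1) z + r⁻¹ * besselK (ν + 1) z := by
  have hK := integrableOn_exp_neg_mul_cosh_mul_cosh hz
  have hgap : 0 < ∫ t in Ioi 0, (r * (exp (-z * cosh t) * cosh ((ν - 1) * t))
      + r⁻¹ * (exp (-z * cosh t) * cosh ((ν + 1) * t)) - 2 * (exp (-z * cosh t) * cosh (ν * t))) :=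
    setIntegral_pos_of_forall_pos measurableSet_Ioi (by simp)
      ((((hK (ν - 1)).const_mul r).add ((hK (ν + 1)).const_mul r⁻¹)).sub ((hK ν).const_mul 2))
      fun t ht => by
        have := mul_lt_mul_of_pos_left (two_mul_cosh_lt ν hr (ne_of_gt ht)) (exp_pos (-z * cosh t))
        linear_combination this
  rw [integral_sub ?_ ((hK ν).const_mul 2), integral_add ((hK (ν - 1)).const_mul r)
    ((hK (ν + 1)).const_mul r⁻¹), integral_const_mul, integral_const_mul,
    integral_const_mul] at hgap
  · unfold besselK
    linarith
  · exact ((hK (ν - 1)).const_mul r).add ((hK (ν + 1)).const_mul r⁻¹)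

theorem besselK_sq_lt_mul (hz : 0 < z) (ν : ℝ) :
    besselK ν z ^ 2 < besselK (ν - 1) z * besselK (ν + 1) z := by
  have hk := besselK_pos hz ν
  have hb := besselK_pos hz (ν - 1)
  have h := two_mul_besselK_lt hz ν (div_pos hk hb)
  rw [div_mul_cancel₀ _ hb.ne', inv_div, div_mul_eq_mul_div] at h
  have h' : besselK ν z < besselK (ν - 1) z * besselK (ν + 1) z / besselK ν z := by linarith
  rwa [lt_div_iff₀ hk, ← sq] at h'

theorem besselK_div_besselK_sub_one_lt (hz : 0 < z) (ν : ℝ) :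
    besselK ν z / besselK (ν - 1) z < (ν + √(z ^ 2 + ν ^ 2)) / z := by
  have hb := besselK_pos hz (ν - 1)
  have hrec := besselK_recurrence hz ν
  have hturan := besselK_sq_lt_mul hz ν
  have hquad : (z * besselK ν z - ν * besselK (ν - 1) z) ^ 2 <
      (√(z ^ 2 + ν ^ 2) * besselK (ν - 1) z) ^ 2 := by
    rw [mul_pow, sq_sqrt (by positivity)]
    have helim : z ^ 2 * (besselK (ν - 1) z * besselK (ν + 1) z) =
        z ^ 2 * besselK (ν - 1) z ^ 2 + 2 * ν * z * besselK ν z * besselK (ν - 1) z := by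
      linear_combination z * besselK (ν - 1) z * hrec
    linear_combination helim + mul_lt_mul_of_pos_left hturan (pow_pos hz 2)
  have hlt := lt_of_abs_lt (abs_lt_of_sq_lt_sq hquad (by positivity))
  rw [div_lt_div_iff₀ hb hz]
  linarith

end

/-- For `a > 0` and `z > 0`: `K_a(z)/K_{a-1}(z) < (a + √(z² + a²))/z`, and consequently
`K_a(z)/K_{a-1}(z) < 2a/z + 1`. -/
theorem besselK_ratio_upper_bound (a : ℝ) (ha : 0 < a) (z : ℝ) (hz : 0 < z) :
    besselK a z / besselK (a - 1) z < (a + Real.sqrt (z ^ 2 + a ^ 2)) / z ∧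
    besselK a z / besselK (a - 1) z < 2 * a / z + 1 := by
  have hbound := besselK_div_besselK_sub_one_lt hz a
  refine ⟨hbound, hbound.trans_le ?_⟩
  have hsqrt : √(z ^ 2 + a ^ 2) ≤ a + z := sqrt_le_iff.2 ⟨by positivity, by nlinarith⟩
  rw [div_le_iff₀ hz, add_mul, div_mul_cancel₀ _ hz.ne']
  linarith
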